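/- Let 𝒢 = (G_n,‖·‖_n)_{n∈ℕ} be a family of metric groups with sup_n sup_{g∈G_n} ‖g‖_n < ∞, and 𝒰 a nonprincipal ultrafilter on ℕ. If the metric ultraproduct 𝒢*_met is perfect (every element is a product of commutators), then 𝒢*_met is uniformly perfect: there is N ∈ ℕ such that every element of 𝒢*_met is a product of N commutators. -/

import Mathlib

open Filter Set Pointwise ENNReal

/-- `CN N g` : the set of all products of at most `N` conjugates of `g` and `g⁻¹`. -/
def CN {H : Type*} [Group H] (N : ℕ) (g : H) : Set H :=
  ⋃ m ≤ N, ({x | IsConj g x} ∪ {x | IsConj g⁻¹ x}) ^ m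

/-- A family of groups equipped with conjugation-invariant pseudo-norms with values in `[0,∞]`. -/
structure PMFamily where
  G : ℕ → Type
  grp : ∀ n, Group (G n)
  ν : ∀ n, G n → ℝ≥0∞
  norm_one : ∀ n, ν n 1 = 0
  norm_mul : ∀ n (g h : G n), ν n (g * h) ≤ ν n g + ν n h
  norm_inv : ∀ n (g : G n), ν n g⁻¹ = ν n g
  norm_conj : ∀ n (g h : G n), ν n (h * g * h⁻¹) = ν n g

attribute [instance] PMFamily.grp

namespace PMFamily

variable (𝒢 : PMFamily) (U : Ultrafilter ℕ)

/-- The subgroup of infinitesimal sequences. -/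
def E : Subgroup (∀ n, 𝒢.G n) where
  carrier := {g | ∀ ε : ℝ≥0∞, 0 < ε → {n | 𝒢.ν n (g n) < ε} ∈ U}
  one_mem' := by
    intro ε hε
    have h : {n | 𝒢.ν n ((1 : ∀ n, 𝒢.G n) n) < ε} = Set.univ := by
      ext n; simpa [𝒢.norm_one n] using hε
    show {n | 𝒢.ν n ((1 : ∀ n, 𝒢.G n) n) < ε} ∈ U
    rw [h]
    exact Filter.univ_mem
  mul_mem' := by
    intro g h hg hh ε hε
    have h2 : (0 : ℝ≥0∞) < ε / 2 := ENNReal.half_pos hε.ne'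
    have key : {n | 𝒢.ν n (g n) < ε / 2} ∩ {n | 𝒢.ν n (h n) < ε / 2} ⊆
        {n | 𝒢.ν n ((g * h) n) < ε} := by
      rintro n ⟨h1, h1'⟩
      simp only [Set.mem_setOf_eq] at h1 h1' ⊢
      calc 𝒢.ν n ((g * h) n) = 𝒢.ν n (g n * h n) := rfl
        _ ≤ 𝒢.ν n (g n) + 𝒢.ν n (h n) := 𝒢.norm_mul n _ _
        _ < ε / 2 + ε / 2 := ENNReal.add_lt_add h1 h1'
        _ = ε := ENNReal.add_halves ε
    exact Filter.mem_of_superset (Filter.inter_mem (hg _ h2) (hh _ h2)) key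
  inv_mem' := by
    intro g hg ε hε
    have h : {n | 𝒢.ν n (g⁻¹ n) < ε} = {n | 𝒢.ν n (g n) < ε} := by
      ext n; simp only [Set.mem_setOf_eq, Pi.inv_apply, 𝒢.norm_inv n]
    show {n | 𝒢.ν n (g⁻¹ n) < ε} ∈ U
    rw [h]
    exact hg ε hε

theorem mem_E {g : ∀ n, 𝒢.G n} :
    g ∈ 𝒢.E U ↔ ∀ ε : ℝ≥0∞, 0 < ε → {n | 𝒢.ν n (g n) < ε} ∈ U := Iff.rfl

instance normal_E : (𝒢.E U).Normal := by
  constructor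
  intro g hg h
  rw [mem_E] at hg ⊢
  intro ε hε
  have heq : {n | 𝒢.ν n ((h * g * h⁻¹) n) < ε} = {n | 𝒢.ν n (g n) < ε} := by
    ext n
    simp only [Set.mem_setOf_eq, Pi.mul_apply, Pi.inv_apply, 𝒢.norm_conj n]
  rw [heq]
  exact hg ε hε

/-- The metric ultraproduct. -/
abbrev Q := (∀ n, 𝒢.G n) ⧸ 𝒢.E U

/-- The limit of the norms along the ultrafilter, on the product group. -/
noncomputable def pnorm (g : ∀ n, 𝒢.G n) : ℝ≥0∞ :=
  Filter.limsup (fun n => 𝒢.ν n (g n)) U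

/-- The induced norm on the metric ultraproduct. -/
noncomputable def qnorm (x : 𝒢.Q U) : ℝ≥0∞ := 𝒢.pnorm U (Quotient.out x)

/-- The open ball of radius `ε` around the identity in the metric ultraproduct. -/
def ball (ε : ℝ≥0∞) : Set (𝒢.Q U) := {x | 𝒢.qnorm U x < ε}

/-- Metrically internal subsets of the metric ultraproduct. -/
def internalSet (Xn : ∀ n, Set (𝒢.G n)) : Set (𝒢.Q U) :=
  (QuotientGroup.mk : (∀ n, 𝒢.G n) → 𝒢.Q U) '' {g | ∀ n, g n ∈ Xn n}

/-- The finitary subgroup of the metric ultraproduct: classes of uniformly bounded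
sequences (equivalently, elements of finite norm). -/
def finSubgroup : Subgroup (𝒢.Q U) where
  carrier := {x | ∃ g : ∀ n, 𝒢.G n, QuotientGroup.mk g = x ∧
    ∃ C : ℝ≥0∞, C ≠ ⊤ ∧ ∀ n, 𝒢.ν n (g n) ≤ C}
  one_mem' := ⟨1, rfl, 0, by simp, fun n => by simp [𝒢.norm_one n]⟩
  mul_mem' := by
    rintro x y ⟨g, rfl, C, hC, hg⟩ ⟨h, rfl, D, hD, hh⟩
    refine ⟨g * h, rfl, C + D, ENNReal.add_ne_top.mpr ⟨hC, hD⟩, fun n => ?_⟩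
    exact le_trans (𝒢.norm_mul n (g n) (h n)) (add_le_add (hg n) (hh n))
  inv_mem' := by
    rintro x ⟨g, rfl, C, hC, hg⟩
    exact ⟨g⁻¹, rfl, C, hC, fun n => by rw [Pi.inv_apply, 𝒢.norm_inv n]; exact hg n⟩

end PMFamily

/-!
Let `S` be the set of commutators of the metric ultraproduct `Q`. Each power `S ^ N` is the
ultraproduct of the sets of products of `N` commutators in the factors, and such internal sets
are closed; moreover `Q` is complete. Perfectness says that the closed sets `S ^ N` cover `Q`, so
by Baire some `S ^ N₀` has interior, and since `S` is symmetric, `S ^ (2 N₀)` contains an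
`ε`-ball around `1`. A diagonal argument along the ultrafilter shows that some `S ^ M` is
`ε`-dense: otherwise, picking for each `M` an element `ε`-far from `S ^ M` and taking at the
coordinate `n` the entry of the `κ n`-th of them, for `κ n → ∞` suitably slowly, produces an
element lying in no `S ^ m`. Hence `Q = S ^ M * S ^ (2 N₀)`.
-/

open scoped Topology commutatorElement

theorem Filter.exists_diagonal_of_le_cofinite {l : Filter ℕ} (hl : l ≤ cofinite)
    {A : ℕ → Set ℕ} (hA : ∀ k, A k ∈ l) :
    ∃ κ : ℕ → ℕ, ∀ m, ∀ᶠ n in l, m ≤ κ n ∧ n ∈ A (κ n) := by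
  classical
  refine ⟨fun n => Nat.findGreatest (fun k => n ∈ A k) n, fun m => ?_⟩
  have hlarge : ∀ᶠ n in l, m ≤ n := hl (Nat.cofinite_eq_atTop ▸ eventually_ge_atTop m)
  filter_upwards [hlarge, hA m] with n hmn hn
  exact ⟨Nat.le_findGreatest hmn hn, Nat.findGreatest_spec (P := fun k => n ∈ A k) hmn hn⟩

theorem Ultrafilter.limsup_add_ennreal {α : Type*} (U : Ultrafilter α) (f g : α → ℝ≥0∞) :
    limsup (f + g) U = limsup f U + limsup g U := by
  have hlim : ∀ u : α → ℝ≥0∞, Tendsto u U (𝓝 (U.map u).lim) := fun u => (U.map u).le_nhds_lim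
  rw [(hlim f).limsup_eq, (hlim g).limsup_eq]
  exact ((hlim f).add (hlim g)).limsup_eq

theorem exists_pi_forall_mem_eventually {ι : Type*} {G : ι → Type*} {l : Filter ι}
    {X : ∀ i, Set (G i)} (hX : ∀ i, (X i).Nonempty) {P : ∀ i, G i → Prop}
    (h : ∀ᶠ i in l, ∃ p ∈ X i, P i p) :
    ∃ p : ∀ i, G i, (∀ i, p i ∈ X i) ∧ ∀ᶠ i in l, P i (p i) := by
  have hchoice : ∀ i, ∃ p ∈ X i, (∃ q ∈ X i, P i q) → P i p := by
    intro i
    by_cases hi : ∃ q ∈ X i, P i q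
    · obtain ⟨q, hq, hPq⟩ := hi
      exact ⟨q, hq, fun _ => hPq⟩
    · obtain ⟨q, hq⟩ := hX i
      exact ⟨q, hq, fun h' => absurd h' hi⟩
  choose p hpX hpP using hchoice
  exact ⟨p, hpX, h.mono fun i hi => hpP i hi⟩

theorem setOf_inv_mul_inv_mul_mul_eq_commutatorSet (H : Type*) [Group H] :
    {x : H | ∃ a b : H, x = a⁻¹ * b⁻¹ * a * b} = commutatorSet H := by
  ext x
  constructor <;>
  · rintro ⟨a, b, rfl⟩
    exact ⟨a⁻¹, b⁻¹, by simp [commutatorElement_def]⟩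

theorem inv_commutatorSet (H : Type*) [Group H] : (commutatorSet H)⁻¹ = commutatorSet H := by
  ext x
  constructor
  · rintro ⟨a, b, h⟩
    exact ⟨b, a, by rw [← commutatorElement_inv, h, inv_inv]⟩
  · rintro ⟨a, b, rfl⟩
    exact ⟨b, a, by rw [← commutatorElement_inv]⟩

theorem inv_mul_mem_pow_add_of_eball_subset_pow {G : Type*} [Group G] [PseudoEMetricSpace G]
    [IsIsometricSMul G G] {S : Set G} (hS : S⁻¹ = S) {N : ℕ} {x₀ : G} {ε : ℝ≥0∞}
    (h : Metric.eball x₀ ε ⊆ S ^ N) {x y : G} (hxy : edist x y < ε) :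
    y⁻¹ * x ∈ S ^ (N + N) := by
  have hx₀ : x₀ ∈ S ^ N := h (Metric.mem_eball_self (zero_le.trans_lt hxy))
  have hx₀inv : x₀⁻¹ ∈ S ^ N := by rwa [← hS, inv_pow, Set.inv_mem_inv]
  have hshift : edist (x₀ * y⁻¹ * x) x₀ = edist x y := by
    simpa only [smul_eq_mul, inv_mul_cancel_right] using edist_smul_left (x₀ * y⁻¹) x y
  rw [pow_add]
  exact ⟨x₀⁻¹, hx₀inv, _, h (Metric.mem_eball.2 (hshift ▸ hxy)), by group⟩

namespace PMFamily

variable {𝒢 : PMFamily} {U : Ultrafilter ℕ}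

theorem tendsto_of_mem_E {e : ∀ n, 𝒢.G n} (he : e ∈ 𝒢.E U) :
    Tendsto (fun n => 𝒢.ν n (e n)) U (𝓝 0) :=
  tendsto_order.2 ⟨fun _ h => absurd h ENNReal.not_lt_zero, he⟩

theorem pnorm_mul_le_of_mem_E (g : ∀ n, 𝒢.G n) {e : ∀ n, 𝒢.G n} (he : e ∈ 𝒢.E U) :
    𝒢.pnorm U (g * e) ≤ 𝒢.pnorm U g := by
  calc 𝒢.pnorm U (g * e)
      ≤ limsup ((fun n => 𝒢.ν n (g n)) + fun n => 𝒢.ν n (e n)) U :=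
        limsup_le_limsup (Eventually.of_forall fun n => 𝒢.norm_mul n (g n) (e n))
    _ = 𝒢.pnorm U g := ENNReal.limsup_add_of_right_tendsto_zero (tendsto_of_mem_E he) _

theorem pnorm_mul_of_mem_E (g : ∀ n, 𝒢.G n) {e : ∀ n, 𝒢.G n} (he : e ∈ 𝒢.E U) :
    𝒢.pnorm U (g * e) = 𝒢.pnorm U g := by
  refine le_antisymm (pnorm_mul_le_of_mem_E g he) ?_
  calc 𝒢.pnorm U g = 𝒢.pnorm U (g * e * e⁻¹) := by rw [mul_inv_cancel_right]
    _ ≤ 𝒢.pnorm U (g * e) := pnorm_mul_le_of_mem_E _ (inv_mem he)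

theorem qnorm_mk (g : ∀ n, 𝒢.G n) : 𝒢.qnorm U (g : 𝒢.Q U) = 𝒢.pnorm U g := by
  obtain ⟨e, he⟩ := QuotientGroup.mk_out_eq_mul (𝒢.E U) g
  rw [qnorm, he]
  exact pnorm_mul_of_mem_E g e.2

theorem qnorm_one : 𝒢.qnorm U 1 = 0 := by
  rw [← QuotientGroup.mk_one, qnorm_mk]
  simp [pnorm, 𝒢.norm_one]

theorem qnorm_inv (x : 𝒢.Q U) : 𝒢.qnorm U x⁻¹ = 𝒢.qnorm U x := by
  induction x using QuotientGroup.induction_on with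
  | H g => simp only [← QuotientGroup.mk_inv, qnorm_mk, pnorm, Pi.inv_apply, 𝒢.norm_inv]

theorem qnorm_mul_le (x y : 𝒢.Q U) : 𝒢.qnorm U (x * y) ≤ 𝒢.qnorm U x + 𝒢.qnorm U y := by
  induction x using QuotientGroup.induction_on with | H g =>
  induction y using QuotientGroup.induction_on with | H h =>
  rw [← QuotientGroup.mk_mul, qnorm_mk, qnorm_mk, qnorm_mk, pnorm, pnorm, pnorm,
    ← Ultrafilter.limsup_add_ennreal]
  exact limsup_le_limsup (Eventually.of_forall fun n => 𝒢.norm_mul n (g n) (h n))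

noncomputable instance : PseudoEMetricSpace (𝒢.Q U) where
  edist x y := 𝒢.qnorm U (x⁻¹ * y)
  edist_self x := by simpa using qnorm_one
  edist_comm x y := by
    show 𝒢.qnorm U (x⁻¹ * y) = 𝒢.qnorm U (y⁻¹ * x)
    rw [← qnorm_inv, mul_inv_rev, inv_inv]
  edist_triangle x y z := by
    show 𝒢.qnorm U (x⁻¹ * z) ≤ 𝒢.qnorm U (x⁻¹ * y) + 𝒢.qnorm U (y⁻¹ * z)
    simpa [mul_assoc] using qnorm_mul_le (x⁻¹ * y) (y⁻¹ * z)

theorem edist_def (x y : 𝒢.Q U) : edist x y = 𝒢.qnorm U (x⁻¹ * y) := rfl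

instance : IsIsometricSMul (𝒢.Q U) (𝒢.Q U) :=
  ⟨fun c x y => by simp only [smul_eq_mul, edist_def, mul_inv_rev, mul_assoc, inv_mul_cancel_left]⟩

theorem edist_mk (g h : ∀ n, 𝒢.G n) :
    edist (g : 𝒢.Q U) h = limsup (fun n => 𝒢.ν n ((g n)⁻¹ * h n)) U := by
  rw [edist_def, ← QuotientGroup.mk_inv, ← QuotientGroup.mk_mul, qnorm_mk]
  rfl

theorem edist_mk_le {g h : ∀ n, 𝒢.G n} {a : ℝ≥0∞}
    (hgh : ∀ᶠ n in U, 𝒢.ν n ((g n)⁻¹ * h n) ≤ a) : edist (g : 𝒢.Q U) h ≤ a :=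
  edist_mk g h ▸ limsup_le_of_le (by isBoundedDefault) hgh

theorem eventually_lt_of_edist_mk_lt {g h : ∀ n, 𝒢.G n} {a : ℝ≥0∞}
    (hgh : edist (g : 𝒢.Q U) h < a) : ∀ᶠ n in U, 𝒢.ν n ((g n)⁻¹ * h n) < a :=
  eventually_lt_of_limsup_lt (edist_mk g h ▸ hgh)

theorem mk_eq_mk_iff {g h : ∀ n, 𝒢.G n} :
    (g : 𝒢.Q U) = h ↔ ∀ ε > 0, ∀ᶠ n in U, 𝒢.ν n ((g n)⁻¹ * h n) < ε :=
  QuotientGroup.eq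

theorem completeSpace_Q (hU : (U : Filter ℕ) ≤ cofinite) : CompleteSpace (𝒢.Q U) := by
  refine EMetric.complete_of_convergent_controlled_sequences (fun k => (k : ℝ≥0∞)⁻¹)
    (fun k => by simp) fun u hu => ?_
  set g : ℕ → ∀ n, 𝒢.G n := fun k => (u k).out
  have hg : ∀ k, (g k : 𝒢.Q U) = u k := fun k => QuotientGroup.out_eq' (u k)
  have hA : ∀ k, {n | ∀ j ∈ Set.Iic k, 𝒢.ν n ((g j n)⁻¹ * g k n) < (j : ℝ≥0∞)⁻¹} ∈ U :=
    fun k => (eventually_all_finite (Set.finite_Iic k)).2 fun j hj =>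
      eventually_lt_of_edist_mk_lt (by rw [hg, hg]; exact hu j j k le_rfl hj)
  obtain ⟨κ, hκ⟩ := exists_diagonal_of_le_cofinite hU hA
  refine ⟨((fun n => g (κ n) n : ∀ n, 𝒢.G n) : 𝒢.Q U), tendsto_iff_edist_tendsto_0.2 ?_⟩
  have hdist : ∀ m, edist (u m) ((fun n => g (κ n) n : ∀ n, 𝒢.G n) : 𝒢.Q U) ≤ (m : ℝ≥0∞)⁻¹ :=
    fun m => hg m ▸ edist_mk_le ((hκ m).mono fun n hn => (hn.2 m hn.1).le)
  exact tendsto_of_tendsto_of_tendsto_of_le_of_le tendsto_const_nhds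
    ENNReal.tendsto_inv_nat_nhds_zero (fun _ => zero_le) hdist

theorem isClosed_internalSet (hU : (U : Filter ℕ) ≤ cofinite) {X : ∀ n, Set (𝒢.G n)}
    (hX : ∀ n, (X n).Nonempty) : IsClosed (𝒢.internalSet U X) := by
  refine isClosed_of_closure_subset fun x hx => ?_
  obtain ⟨g, rfl⟩ := QuotientGroup.mk_surjective x
  have hA : ∀ k : ℕ, {n | ∃ p ∈ X n, 𝒢.ν n ((g n)⁻¹ * p) < (k : ℝ≥0∞)⁻¹} ∈ U := fun k => by
    obtain ⟨_, ⟨p, hp, rfl⟩, hgp⟩ := EMetric.mem_closure_iff.1 hx (k : ℝ≥0∞)⁻¹ (by simp)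
    exact (eventually_lt_of_edist_mk_lt hgp).mono fun n hn => ⟨p n, hp n, hn⟩
  obtain ⟨κ, hκ⟩ := exists_diagonal_of_le_cofinite hU hA
  obtain ⟨p, hpX, hp⟩ := exists_pi_forall_mem_eventually hX ((hκ 0).mono fun n hn => hn.2)
  refine ⟨p, hpX, (mk_eq_mk_iff.2 fun ε hε => ?_).symm⟩
  obtain ⟨m, hm⟩ := (ENNReal.tendsto_inv_nat_nhds_zero.eventually_lt_const hε).exists
  filter_upwards [hp, hκ m] with n hn hmn
  calc 𝒢.ν n ((g n)⁻¹ * p n) < (κ n : ℝ≥0∞)⁻¹ := hn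
    _ ≤ (m : ℝ≥0∞)⁻¹ := by gcongr; exact hmn.1
    _ < ε := hm

theorem exists_edist_lt_internalSet_of_forall_exists_mem (hU : (U : Filter ℕ) ≤ cofinite)
    {X : ℕ → ∀ n, Set (𝒢.G n)} (hX : ∀ M n, (X M n).Nonempty)
    (hmono : ∀ n, Monotone fun M => X M n) (hcover : ∀ x : 𝒢.Q U, ∃ M, x ∈ 𝒢.internalSet U (X M))
    {ε : ℝ≥0∞} (hε : 0 < ε) :
    ∃ M, ∀ x : 𝒢.Q U, ∃ q ∈ 𝒢.internalSet U (X M), edist x q < ε := by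
  by_contra! hfar
  choose x hx using hfar
  obtain ⟨δ, hδ, hδε⟩ := exists_between hε
  set g : ℕ → ∀ n, 𝒢.G n := fun M => (x M).out
  have hB : ∀ M, {n | ∀ p ∈ X M n, δ ≤ 𝒢.ν n ((g M n)⁻¹ * p)} ∈ U := by
    intro M
    by_contra hnot
    have hnear : ∀ᶠ n in U, ∃ p ∈ X M n, 𝒢.ν n ((g M n)⁻¹ * p) < δ :=
      Filter.mem_of_superset (Ultrafilter.compl_mem_iff_notMem.2 hnot) fun n hn => by simpa using hn
    obtain ⟨p, hpX, hp⟩ := exists_pi_forall_mem_eventually (hX M) hnear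
    have hle : edist (x M) (p : 𝒢.Q U) ≤ δ := by
      rw [← QuotientGroup.out_eq' (x M)]
      exact edist_mk_le (hp.mono fun _ h => h.le)
    exact ((hx M _ ⟨p, hpX, rfl⟩).trans hle).not_gt hδε
  obtain ⟨κ, hκ⟩ := exists_diagonal_of_le_cofinite hU hB
  obtain ⟨m, p, hpX, hpy⟩ := hcover ((fun n => g (κ n) n : ∀ n, 𝒢.G n) : 𝒢.Q U)
  obtain ⟨n, hn, hmn, hfar⟩ := ((mk_eq_mk_iff.1 hpy.symm δ hδ).and (hκ m)).exists
  exact (hfar (p n) (hmono n hmn (hpX n))).not_gt hn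

theorem internalSet_one : 𝒢.internalSet U 1 = 1 := by
  ext x
  constructor
  · rintro ⟨g, hg, rfl⟩
    rw [show g = 1 from funext hg, QuotientGroup.mk_one]
    rfl
  · rintro rfl
    exact ⟨1, fun _ => rfl, QuotientGroup.mk_one _⟩

theorem internalSet_mul (X Y : ∀ n, Set (𝒢.G n)) :
    𝒢.internalSet U (X * Y) = 𝒢.internalSet U X * 𝒢.internalSet U Y := by
  ext x
  constructor
  · rintro ⟨g, hg, rfl⟩
    choose a ha b hb hab using fun n => Set.mem_mul.1 (hg n)
    refine ⟨a, ⟨a, ha, rfl⟩, b, ⟨b, hb, rfl⟩, ?_⟩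
    exact (QuotientGroup.mk_mul _ a b).symm.trans (congrArg _ (funext hab))
  · rintro ⟨_, ⟨a, ha, rfl⟩, _, ⟨b, hb, rfl⟩, rfl⟩
    exact ⟨a * b, fun n => Set.mul_mem_mul (ha n) (hb n), QuotientGroup.mk_mul _ a b⟩

theorem internalSet_pow (X : ∀ n, Set (𝒢.G n)) (M : ℕ) :
    𝒢.internalSet U (X ^ M) = 𝒢.internalSet U X ^ M := by
  induction M with
  | zero => rw [pow_zero, pow_zero, internalSet_one]
  | succ M ih => rw [pow_succ, pow_succ, internalSet_mul, ih]

theorem mk_commutatorElement (a b : ∀ n, 𝒢.G n) :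
    ((⁅a, b⁆ : ∀ n, 𝒢.G n) : 𝒢.Q U) = ⁅(a : 𝒢.Q U), (b : 𝒢.Q U)⁆ :=
  map_commutatorElement (QuotientGroup.mk' (𝒢.E U)) a b

theorem internalSet_commutatorSet :
    𝒢.internalSet U (fun n => commutatorSet (𝒢.G n)) = commutatorSet (𝒢.Q U) := by
  ext x
  constructor
  · rintro ⟨g, hg, rfl⟩
    choose a b hab using fun n => mem_commutatorSet_iff.1 (hg n)
    exact ⟨a, b, (mk_commutatorElement a b).symm.trans (congrArg _ (funext hab))⟩
  · rintro ⟨a, b, rfl⟩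
    obtain ⟨a, rfl⟩ := QuotientGroup.mk_surjective a
    obtain ⟨b, rfl⟩ := QuotientGroup.mk_surjective b
    exact ⟨⁅a, b⁆, fun n => commutator_mem_commutatorSet (a n) (b n), mk_commutatorElement a b⟩

theorem commutatorSet_pow_eq_internalSet (M : ℕ) :
    commutatorSet (𝒢.Q U) ^ M = 𝒢.internalSet U ((fun n => commutatorSet (𝒢.G n)) ^ M) := by
  rw [internalSet_pow, internalSet_commutatorSet]

theorem isClosed_commutatorSet_pow (hU : (U : Filter ℕ) ≤ cofinite) (M : ℕ) :
    IsClosed (commutatorSet (𝒢.Q U) ^ M) :=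
  commutatorSet_pow_eq_internalSet M ▸
    isClosed_internalSet hU fun _ => ⟨1, Set.one_mem_pow (one_mem_commutatorSet _)⟩

theorem exists_edist_lt_commutatorSet_pow (hU : (U : Filter ℕ) ≤ cofinite)
    (hperf : ∀ x : 𝒢.Q U, ∃ M, x ∈ commutatorSet (𝒢.Q U) ^ M) {ε : ℝ≥0∞} (hε : 0 < ε) :
    ∃ M, ∀ x : 𝒢.Q U, ∃ q ∈ commutatorSet (𝒢.Q U) ^ M, edist x q < ε := by
  simp only [commutatorSet_pow_eq_internalSet] at hperf ⊢
  exact exists_edist_lt_internalSet_of_forall_exists_mem hU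
    (fun _ _ => ⟨1, Set.one_mem_pow (one_mem_commutatorSet _)⟩)
    (fun _ _ _ h => Set.pow_subset_pow_right (one_mem_commutatorSet _) h) hperf hε

end PMFamily

theorem statement5_general (𝒢 : PMFamily)
    (U : Ultrafilter ℕ) (hU : (U : Filter ℕ) ≤ Filter.cofinite)
    (hperf : ∀ g : 𝒢.Q U, ∃ m : ℕ,
      g ∈ ({x | ∃ a b : 𝒢.Q U, x = a⁻¹ * b⁻¹ * a * b} : Set (𝒢.Q U)) ^ m) :
    ∃ N : ℕ, ∀ g : 𝒢.Q U,
      g ∈ ({x | ∃ a b : 𝒢.Q U, x = a⁻¹ * b⁻¹ * a * b} : Set (𝒢.Q U)) ^ N := by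
  simp only [setOf_inv_mul_inv_mul_mul_eq_commutatorSet] at hperf ⊢
  have := PMFamily.completeSpace_Q (𝒢 := 𝒢) hU
  obtain ⟨N₀, x₀, hx₀⟩ := nonempty_interior_of_iUnion_of_closed
    (PMFamily.isClosed_commutatorSet_pow hU) (Set.iUnion_eq_univ_iff.2 hperf)
  obtain ⟨ε, hε, hball⟩ := EMetric.mem_nhds_iff.1 (mem_interior_iff_mem_nhds.1 hx₀)
  obtain ⟨M, hM⟩ := PMFamily.exists_edist_lt_commutatorSet_pow hU hperf hε
  refine ⟨M + (N₀ + N₀), fun x => ?_⟩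
  obtain ⟨q, hq, hxq⟩ := hM x
  rw [pow_add]
  exact ⟨q, hq, q⁻¹ * x,
    inv_mul_mem_pow_add_of_eball_subset_pow (inv_commutatorSet _) hball hxq, mul_inv_cancel_left q x⟩

/-- uniform perfectness, bounded case. If the norms are uniformly bounded
and the metric ultraproduct is perfect (every element is a product of commutators), then it is
uniformly perfect: there is `N` such that every element is a product of `N` commutators. -/
theorem statement5 (𝒢 : PMFamily)
    (hmetric : ∀ n (g : 𝒢.G n), 𝒢.ν n g = 0 ↔ g = 1)
    (U : Ultrafilter ℕ) (hU : (U : Filter ℕ) ≤ Filter.cofinite)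
    (hbdd : ∃ C : ℝ≥0∞, C ≠ ⊤ ∧ ∀ n (g : 𝒢.G n), 𝒢.ν n g ≤ C)
    (hperf : ∀ g : 𝒢.Q U, ∃ m : ℕ,
      g ∈ ({x | ∃ a b : 𝒢.Q U, x = a⁻¹ * b⁻¹ * a * b} : Set (𝒢.Q U)) ^ m) :
    ∃ N : ℕ, ∀ g : 𝒢.Q U,
      g ∈ ({x | ∃ a b : 𝒢.Q U, x = a⁻¹ * b⁻¹ * a * b} : Set (𝒢.Q U)) ^ N :=
  statement5_general 𝒢 U hU hperf
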